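/- Fix a transversal Λ of the matching-pair involution on Ω (i.e., Λ contains exactly one of {u,w} and {-u,-w} for each matching pair, |Λ| = d²). A local function g : Q^V → ℝ is a perturbation if and only if g vanishes on all monomers and for every neighborhood configuration N it holds that g(N) = Σ_{{u,w}∈Λ} [ g(D(u:N(u), w:N(w))) − g(D(u:N(-w), w:N(-u))) ]. -/
import Mathlib


/-- Directions of the von Neumann neighborhood: `none` is the zero vector,
`some (k, b)` is `e_k` if `b = true` and `-e_k` if `b = false`. -/
abbrev Dir (d : ℕ) := Option (Fin d × Bool)

/-- The opposite direction. -/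
def negDir {d : ℕ} : Dir d → Dir d
  | none => none
  | some (k, b) => some (k, !b)

/-- The integer vector corresponding to a direction. -/
def dirVec {d : ℕ} : Dir d → Fin d → ℤ
  | none => fun _ => 0
  | some (k, b) => fun j => if j = k then (if b then 1 else -1) else 0

/-- The `d`-dimensional torus with side lengths `n k`. -/
abbrev Cell (d : ℕ) (n : Fin d → ℕ) := ∀ k, ZMod (n k)

/-- Translation of a cell by an integer vector (componentwise mod `n k`). -/
def cellAdd {d : ℕ} {n : Fin d → ℕ} (i : Cell d n) (v : Fin d → ℤ) : Cell d n :=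
  fun k => i k + (v k : ZMod (n k))

/-- The von Neumann neighborhood of a cell, as a set of cells. -/
def nbhdSet {d : ℕ} {n : Fin d → ℕ} (i : Cell d n) : Set (Cell d n) :=
  {c | ∃ v : Dir d, c = cellAdd i (dirVec v)}

/-- The neighborhood configuration of cell `i` in configuration `x`. -/
def nbhd {d : ℕ} {n : Fin d → ℕ} {α : Type*} (x : Cell d n → α) (i : Cell d n) :
    Dir d → α :=
  fun v => x (cellAdd i (dirVec v))

/-- The monomer `M_{v:q}`: value `q` in direction `v`, zero elsewhere. -/
def monomer {d : ℕ} (v : Dir d) (q : ℝ) : Dir d → ℝ :=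
  fun u => if u = v then q else 0

/-- The dimer `D(u:p, w:q)`: value `p` in direction `u`, `q` in direction `w`,
zero elsewhere. -/
def dimer {d : ℕ} (u : Dir d) (p : ℝ) (w : Dir d) (q : ℝ) : Dir d → ℝ :=
  fun v => if v = u then p else if v = w then q else 0

/-- `f` is number-conserving: on every torus with all side lengths `> 4` the
induced global map preserves the sum of states, for `Q`-valued configurations. -/
def NumberConserving {d : ℕ} (Q : Set ℝ) (f : (Dir d → ℝ) → ℝ) : Prop :=
  ∀ (n : Fin d → ℕ) (hn : ∀ k, 4 < n k) (x : Cell d n → ℝ), (∀ i, x i ∈ Q) →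
    haveI : ∀ k, NeZero (n k) := fun k => ⟨by have := hn k; omega⟩
    ∑ i, f (nbhd x i) = ∑ i, x i

/-- Split function: (S1), (S2) and (S3). -/
def SplitFunction {d : ℕ} (Q : Set ℝ) (h : (Dir d → ℝ) → ℝ) : Prop :=
  (∀ (v : Dir d) (q : ℝ), q ∈ Q → h (monomer v q) ∈ Q) ∧
  (∀ q : ℝ, q ∈ Q → ∑ v : Dir d, h (monomer v q) = q) ∧
  (∀ N : Dir d → ℝ, (∀ v, N v ∈ Q) → h N = ∑ v : Dir d, h (monomer v (N v)))

/-- Perturbation: vanishes on monomers (P1), and its global map sends every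
configuration to a zero-sum configuration (P2). -/
def Perturbation {d : ℕ} (Q : Set ℝ) (g : (Dir d → ℝ) → ℝ) : Prop :=
  (∀ (v : Dir d) (q : ℝ), q ∈ Q → g (monomer v q) = 0) ∧
  ∀ (n : Fin d → ℕ) (hn : ∀ k, 4 < n k) (x : Cell d n → ℝ), (∀ i, x i ∈ Q) →
    haveI : ∀ k, NeZero (n k) := fun k => ⟨by have := hn k; omega⟩
    ∑ i, g (nbhd x i) = 0

/-- The defining condition of the set `Ω` of admissible pairs of directions. -/
def OmegaPair {d : ℕ} (u w : Dir d) : Prop :=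
  (u = none ∧ w ≠ none) ∨ (u ≠ none ∧ w ≠ none ∧ u ≠ w ∧ u ≠ negDir w)


lemma negDir_negDir {d : ℕ} (v : Dir d) : negDir (negDir v) = v := by
  rcases v with _ | ⟨k, b⟩ <;> simp [negDir]

lemma negDir_inj {d : ℕ} {u v : Dir d} (h : negDir u = negDir v) : u = v := by
  have := congrArg negDir h; rwa [negDir_negDir, negDir_negDir] at this

lemma negDir_eq_none {d : ℕ} {v : Dir d} : negDir v = none ↔ v = none := by
  rcases v with _ | ⟨k, b⟩ <;> simp [negDir]

lemma negDir_eq_self {d : ℕ} (v : Dir d) : negDir v = v ↔ v = none := by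
  rcases v with _ | ⟨k, b⟩
  · simp [negDir]
  · cases b <;> simp [negDir]

lemma dirVec_negDir {d : ℕ} (v : Dir d) (j : Fin d) : dirVec (negDir v) j = - dirVec v j := by
  rcases v with _ | ⟨k, b⟩
  · simp [negDir, dirVec]
  · cases b <;> simp [negDir, dirVec] <;> split_ifs <;> simp

lemma dirVec_bd {d : ℕ} (v : Dir d) (j : Fin d) : -1 ≤ dirVec v j ∧ dirVec v j ≤ 1 := by
  rcases v with _ | ⟨k, b⟩
  · simp [dirVec]
  · cases b <;> simp [dirVec] <;> split_ifs <;> simp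

lemma dirVec_inj {d : ℕ} {u v : Dir d} (h : ∀ j, dirVec u j = dirVec v j) : u = v := by
  rcases u with _ | ⟨k, a⟩ <;> rcases v with _ | ⟨m, c⟩
  · rfl
  · have := h m; cases c <;> simp [dirVec] at this
  · have := h k; cases a <;> simp [dirVec] at this
  · have hk := h k; have hm := h m
    by_cases hkm : k = m <;> cases a <;> cases c <;> subst_vars <;> simp_all [dirVec]

lemma add_eq_zero_iff_negDir {d : ℕ} {p q : Dir d} :
    (∀ j, dirVec p j + dirVec q j = 0) ↔ p = negDir q := by
  constructor
  · intro h
    exact dirVec_inj (fun j => by rw [dirVec_negDir]; linarith [h j])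
  · intro h j; rw [h, dirVec_negDir]; ring

set_option maxHeartbeats 2000000 in
lemma sumeq_some {d : ℕ} {k l m n : Fin d} {a b c e : Bool}
    (h : ∀ j, dirVec (some (k,a)) j + dirVec (some (l,b)) j
      = dirVec (some (m,c)) j + dirVec (some (n,e)) j) :
    ((some (k,a) : Dir d) = some (m,c) ∧ (some (l,b) : Dir d) = some (n,e)) ∨
    ((some (k,a) : Dir d) = some (n,e) ∧ (some (l,b) : Dir d) = some (m,c)) ∨
    (some (k,a) : Dir d) = negDir (some (l,b)) := by
  have hk := h k; have hl := h l; have hm := h m; have hn := h n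
  simp only [dirVec] at hk hl hm hn
  by_cases h1 : k = l <;> by_cases h2 : k = m <;> by_cases h3 : k = n <;>
  by_cases h4 : l = m <;> by_cases h5 : l = n <;> by_cases h6 : m = n <;>
  cases a <;> cases b <;> cases c <;> cases e <;>
  subst_vars <;> simp_all [negDir]

set_option maxHeartbeats 1000000 in
lemma single_eq_add {d : ℕ} {q r s : Dir d}
    (h : ∀ j, dirVec q j = dirVec r j + dirVec s j) :
    (q = r ∧ s = none) ∨ (q = s ∧ r = none) ∨ (q = none ∧ r = negDir s) := by
  rcases q with _ | ⟨k, a⟩ <;> rcases r with _ | ⟨m, c⟩ <;> rcases s with _ | ⟨n, e⟩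
  · exact Or.inr (Or.inr ⟨rfl, rfl⟩)
  · have := h n; cases e <;> simp [dirVec] at this
  · have := h m; cases c <;> simp [dirVec] at this
  · refine Or.inr (Or.inr ⟨rfl, add_eq_zero_iff_negDir.mp (fun j => by
      have := h j; simp only [dirVec] at this ⊢; linarith)⟩)
  · have := h k; cases a <;> simp [dirVec] at this
  · refine Or.inr (Or.inl ⟨dirVec_inj (fun j => by
      have := h j; simp only [dirVec] at this ⊢; linarith), rfl⟩)
  · refine Or.inl ⟨dirVec_inj (fun j => by
      have := h j; simp only [dirVec] at this ⊢; linarith), rfl⟩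
  · have hk := h k; have hm := h m; have hn := h n
    simp only [dirVec] at hk hm hn
    by_cases h1 : k = m <;> by_cases h2 : k = n <;> by_cases h3 : m = n <;>
    cases a <;> cases c <;> cases e <;> subst_vars <;> simp_all

lemma sumeq {d : ℕ} {p q r s : Dir d}
    (h : ∀ j, dirVec p j + dirVec q j = dirVec r j + dirVec s j) :
    (p = r ∧ q = s) ∨ (p = s ∧ q = r) ∨ p = negDir q := by
  rcases p with _ | ⟨k, a⟩
  · have h' : ∀ j, dirVec q j = dirVec r j + dirVec s j := by
      intro j; have := h j; simp only [dirVec] at this ⊢; linarith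
    rcases single_eq_add h' with ⟨h1, h2⟩ | ⟨h1, h2⟩ | ⟨h1, h2⟩
    · exact Or.inr (Or.inl ⟨h2.symm, h1⟩)
    · exact Or.inl ⟨h2.symm, h1⟩
    · subst h1; exact Or.inr (Or.inr rfl)
  · rcases q with _ | ⟨l, b⟩
    · have h' : ∀ j, dirVec (some (k,a) : Dir d) j = dirVec r j + dirVec s j := by
        intro j; have := h j; simp only [dirVec] at this ⊢; linarith
      rcases single_eq_add h' with ⟨h1, h2⟩ | ⟨h1, h2⟩ | ⟨h1, h2⟩
      · exact Or.inl ⟨h1, h2.symm⟩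
      · exact Or.inr (Or.inl ⟨h1, h2.symm⟩)
      · simp at h1
    · rcases r with _ | ⟨m, c⟩
      · have h' : ∀ j, dirVec s j
            = dirVec (some (k,a) : Dir d) j + dirVec (some (l,b) : Dir d) j := by
          intro j; have := h j; simp only [dirVec] at this ⊢; linarith
        rcases single_eq_add h' with ⟨h1, h2⟩ | ⟨h1, h2⟩ | ⟨h1, h2⟩
        · simp at h2
        · simp at h2
        · exact Or.inr (Or.inr h2)
      · rcases s with _ | ⟨n, e⟩
        · have h' : ∀ j, dirVec (some (m,c) : Dir d) j
              = dirVec (some (k,a) : Dir d) j + dirVec (some (l,b) : Dir d) j := by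
            intro j; have := h j; simp only [dirVec] at this ⊢; linarith
          rcases single_eq_add h' with ⟨h1, h2⟩ | ⟨h1, h2⟩ | ⟨h1, h2⟩
          · simp at h2
          · simp at h2
          · simp at h1
        · exact sumeq_some h

lemma cast5 {z1 z2 : ℤ} (h1 : z1 - z2 ≤ 4) (h2 : z2 - z1 ≤ 4)
    (h : ((z1 : ZMod 5)) = (z2 : ZMod 5)) : z1 = z2 := by
  have h5 : ((z1 - z2 : ℤ) : ZMod 5) = 0 := by push_cast; rw [h]; ring
  have := (ZMod.intCast_zmod_eq_zero_iff_dvd _ 5).mp h5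
  omega

lemma cellAdd_cellAdd {d : ℕ} {n : Fin d → ℕ} (i : Cell d n) (z z' : Fin d → ℤ) :
    cellAdd (cellAdd i z) z' = cellAdd i (fun k => z k + z' k) := by
  funext k; simp [cellAdd]; push_cast; ring

def cellEquiv {d : ℕ} {n : Fin d → ℕ} (z : Fin d → ℤ) : Cell d n ≃ Cell d n where
  toFun i := cellAdd i z
  invFun i := cellAdd i (fun k => -(z k))
  left_inv i := by funext k; simp [cellAdd]
  right_inv i := by funext k; simp [cellAdd]

lemma dimer_comm {d : ℕ} {u w : Dir d} (h : u ≠ w) (p q : ℝ) :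
    dimer u p w q = dimer w q u p := by
  funext v; by_cases h1 : v = u <;> by_cases h2 : v = w <;>
    simp_all [dimer]

lemma dimer_zero_right {d : ℕ} (u : Dir d) (p : ℝ) (w : Dir d) :
    dimer u p w 0 = monomer u p := by
  funext v; by_cases h1 : v = u <;> by_cases h2 : v = w <;> simp_all [dimer, monomer]

lemma dimer_zero_left {d : ℕ} {u w : Dir d} (h : u ≠ w) (q : ℝ) :
    dimer u 0 w q = monomer w q := by
  funext v; by_cases h1 : v = u <;> by_cases h2 : v = w <;> simp_all [dimer, monomer]

lemma card_allsym {d : ℕ} :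
    (Finset.univ.filter (fun s : Dir d × Dir d => s.1 ≠ s.2 ∧ s.1 ≠ negDir s.2)).card
      = 4 * d^2 := by
  classical
  set A := Finset.univ.image (fun u : Dir d => (u, u)) with hAdef
  set B := Finset.univ.image (fun w : Dir d => (negDir w, w)) with hBdef
  have hDir : Fintype.card (Dir d) = 2 * d + 1 := by
    simp [Fintype.card_option, Fintype.card_prod]; ring
  have hA : A.card = 2 * d + 1 := by
    rw [hAdef, Finset.card_image_of_injective _ (fun a b hab => congrArg Prod.fst hab),
      Finset.card_univ, hDir]
  have hB : B.card = 2 * d + 1 := by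
    rw [hBdef, Finset.card_image_of_injective _ (fun a b hab => congrArg Prod.snd hab),
      Finset.card_univ, hDir]
  have hAB : A ∩ B = {((none : Dir d), (none : Dir d))} := by
    ext s
    constructor
    · intro hs
      have hs1 := Finset.mem_inter.mp hs
      obtain ⟨u', -, hu⟩ := Finset.mem_image.mp hs1.1
      obtain ⟨w', -, hw⟩ := Finset.mem_image.mp hs1.2
      have h1 : s.1 = s.2 := by rw [← hu]
      have h2 : s.1 = negDir s.2 := by rw [← hw]
      have h3 : negDir s.2 = s.2 := by rw [← h2, h1]
      rw [negDir_eq_self] at h3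
      rw [Finset.mem_singleton]
      refine Prod.ext_iff.mpr ⟨?_, h3⟩
      rw [h1, h3]
    · intro hs
      rw [Finset.mem_singleton] at hs
      subst hs
      exact Finset.mem_inter.mpr ⟨Finset.mem_image.mpr ⟨none, Finset.mem_univ _, rfl⟩,
        Finset.mem_image.mpr ⟨none, Finset.mem_univ _, rfl⟩⟩
  have hU : Finset.univ.filter (fun s : Dir d × Dir d => s.1 ≠ s.2 ∧ s.1 ≠ negDir s.2)
      = Finset.univ \ (A ∪ B) := by
    ext s
    simp only [Finset.mem_filter, Finset.mem_univ, true_and, Finset.mem_sdiff,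
      Finset.mem_union]
    constructor
    · rintro ⟨h1, h2⟩
      rintro (hA' | hB')
      · obtain ⟨u', -, hu⟩ := Finset.mem_image.mp hA'
        exact h1 (by rw [← hu])
      · obtain ⟨w', -, hw⟩ := Finset.mem_image.mp hB'
        exact h2 (by rw [← hw])
    · intro h
      constructor
      · intro he
        exact h (Or.inl (Finset.mem_image.mpr ⟨s.1, Finset.mem_univ _,
          Prod.ext_iff.mpr ⟨rfl, he⟩⟩))
      · intro he
        exact h (Or.inr (Finset.mem_image.mpr ⟨s.2, Finset.mem_univ _,
          Prod.ext_iff.mpr ⟨he.symm, rfl⟩⟩))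
  rw [hU, Finset.card_sdiff_of_subset (Finset.subset_univ _)]
  have hcui := Finset.card_union_add_card_inter A B
  rw [hAB, hA, hB] at hcui
  simp only [Finset.card_singleton] at hcui
  have hcard : (Finset.univ : Finset (Dir d × Dir d)).card = (2*d+1) * (2*d+1) := by
    rw [Finset.card_univ, Fintype.card_prod, hDir]
  rw [hcard]
  obtain ⟨D, hD⟩ : ∃ D, d^2 = D := ⟨_, rfl⟩
  have hDD : (2*d+1) * (2*d+1) = 4*D + 4*d + 1 := by rw [← hD]; ring
  omega

lemma no_swap_pair {d : ℕ} (hd : 1 ≤ d) (Λ : Finset (Dir d × Dir d))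
    (hcov : ∀ u w : Dir d, u ≠ w → u ≠ negDir w →
      (u,w) ∈ Λ ∨ (w,u) ∈ Λ ∨ (negDir u, negDir w) ∈ Λ ∨ (negDir w, negDir u) ∈ Λ)
    (hΛ3 : Λ.card = d^2) {a : Dir d × Dir d} (ha : a ∈ Λ) (hb : (a.2, a.1) ∈ Λ) :
    False := by
  classical
  set M := Λ ∪ Λ.image Prod.swap with hMdef
  set negmap : Dir d × Dir d → Dir d × Dir d := fun s => (negDir s.1, negDir s.2) with hnm
  have hsub : Finset.univ.filter (fun s : Dir d × Dir d => s.1 ≠ s.2 ∧ s.1 ≠ negDir s.2)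
      ⊆ M ∪ M.image negmap := by
    intro s hs
    rw [Finset.mem_filter] at hs
    obtain ⟨-, h1, h2⟩ := hs
    rcases hcov s.1 s.2 h1 h2 with hc | hc | hc | hc
    · exact Finset.mem_union_left _ (Finset.mem_union_left _ (by simpa using hc))
    · refine Finset.mem_union_left _ (Finset.mem_union_right _ ?_)
      exact Finset.mem_image.mpr ⟨(s.2, s.1), hc, by simp⟩
    · refine Finset.mem_union_right _ (Finset.mem_image.mpr
        ⟨(negDir s.1, negDir s.2), Finset.mem_union_left _ hc, by simp [hnm, negDir_negDir]⟩)
    · refine Finset.mem_union_right _ (Finset.mem_image.mpr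
        ⟨(negDir s.1, negDir s.2), Finset.mem_union_right _ ?_, by simp [hnm, negDir_negDir]⟩)
      exact Finset.mem_image.mpr ⟨(negDir s.2, negDir s.1), hc, by simp⟩
  have haM : a ∈ Λ.image Prod.swap := Finset.mem_image.mpr ⟨(a.2, a.1), hb, by simp⟩
  have hMsub : M ⊆ Λ ∪ (Λ.image Prod.swap).erase a := by
    intro s hs
    rcases Finset.mem_union.mp hs with h | h
    · exact Finset.mem_union_left _ h
    · by_cases hsa : s = a
      · exact Finset.mem_union_left _ (hsa ▸ ha)
      · exact Finset.mem_union_right _ (Finset.mem_erase.mpr ⟨hsa, h⟩)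
  have hswapcard : (Λ.image Prod.swap).card = d^2 := by
    rw [Finset.card_image_of_injective _ Prod.swap_injective, hΛ3]
  have hM : M.card ≤ d^2 + (d^2 - 1) := by
    calc M.card ≤ (Λ ∪ (Λ.image Prod.swap).erase a).card := Finset.card_le_card hMsub
    _ ≤ Λ.card + ((Λ.image Prod.swap).erase a).card := Finset.card_union_le _ _
    _ = d^2 + (d^2 - 1) := by rw [hΛ3, Finset.card_erase_of_mem haM, hswapcard]
  have hbig := Finset.card_le_card hsub
  rw [card_allsym] at hbig
  have hbig2 : (M ∪ M.image negmap).card ≤ M.card + M.card :=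
    le_trans (Finset.card_union_le _ _) (by
      have := Finset.card_image_le (s := M) (f := negmap); omega)
  have h1 : 1 ≤ d^2 := Nat.one_le_pow _ _ (by omega)
  obtain ⟨D, hD⟩ : ∃ D, d^2 = D := ⟨_, rfl⟩
  rw [hD] at hM hbig h1
  omega

def emb5 {d : ℕ} (v : Dir d) : Cell d (fun _ => 5) :=
  fun k => ((dirVec v k : ℤ) : ZMod 5)

def psi5 {d : ℕ} (s : Dir d × Dir d) : Cell d (fun _ => 5) :=
  fun k => ((-(dirVec s.1 k + dirVec s.2 k) : ℤ) : ZMod 5)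

def zeroC5 {d : ℕ} : Cell d (fun _ => 5) := fun _ => (0 : ZMod 5)

lemma emb5_inj {d : ℕ} {v w : Dir d} (h : emb5 v = emb5 w) : v = w := by
  apply dirVec_inj
  intro j
  have hj := congrFun h j
  obtain ⟨b1, b2⟩ := dirVec_bd v j
  obtain ⟨b3, b4⟩ := dirVec_bd w j
  exact cast5 (by omega) (by omega) hj

lemma cellAdd_zero5 {d : ℕ} (v : Dir d) : cellAdd zeroC5 (dirVec v) = emb5 v := by
  funext k; simp [cellAdd, zeroC5, emb5]

lemma psi5_swap {d : ℕ} (a b : Dir d) : psi5 (b, a) = psi5 (a, b) := by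
  funext k; simp only [psi5]; congr 1; ring

lemma psi5_ne_zero {d : ℕ} {s : Dir d × Dir d} (hs2 : s.1 ≠ negDir s.2) :
    psi5 s ≠ zeroC5 := by
  intro h
  apply hs2
  apply add_eq_zero_iff_negDir.mp
  intro j
  have hj := congrFun h j
  simp only [psi5, zeroC5] at hj
  obtain ⟨b1, b2⟩ := dirVec_bd s.1 j
  obtain ⟨b3, b4⟩ := dirVec_bd s.2 j
  have : (-(dirVec s.1 j + dirVec s.2 j) : ℤ) = ((0 : ℤ) : ℤ) := by
    refine cast5 (by omega) (by omega) ?_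
    rw [hj]; simp
  omega

lemma psi5_zero {d : ℕ} {s : Dir d × Dir d} (hs2 : s.1 = negDir s.2) :
    psi5 s = zeroC5 := by
  funext k
  simp only [psi5, zeroC5, hs2, dirVec_negDir]
  norm_num

lemma psi5_eq {d : ℕ} {s t : Dir d × Dir d} (h : psi5 s = psi5 t) :
    (s.1 = t.1 ∧ s.2 = t.2) ∨ (s.1 = t.2 ∧ s.2 = t.1) ∨ s.1 = negDir s.2 := by
  have key : ∀ j, dirVec s.1 j + dirVec s.2 j = dirVec t.1 j + dirVec t.2 j := by
    intro j
    have hj := congrFun h j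
    simp only [psi5] at hj
    obtain ⟨b1, b2⟩ := dirVec_bd s.1 j
    obtain ⟨b3, b4⟩ := dirVec_bd s.2 j
    obtain ⟨b5, b6⟩ := dirVec_bd t.1 j
    obtain ⟨b7, b8⟩ := dirVec_bd t.2 j
    have := cast5 (z1 := -(dirVec s.1 j + dirVec s.2 j)) (z2 := -(dirVec t.1 j + dirVec t.2 j))
      (by omega) (by omega) hj
    omega
  rcases sumeq key with ⟨h1, h2⟩ | ⟨h1, h2⟩ | h1
  · exact Or.inl ⟨h1, h2⟩
  · exact Or.inr (Or.inl ⟨h1, h2⟩)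
  · exact Or.inr (Or.inr h1)

lemma hit_unique {d : ℕ} {i : Cell d (fun _ => 5)} {v1 w1 v2 w2 : Dir d}
    (h1 : cellAdd i (dirVec v1) = emb5 w1) (h2 : cellAdd i (dirVec v2) = emb5 w2)
    (hne : v1 ≠ v2) (hiz : i ≠ zeroC5) :
    w1 = negDir v2 ∧ w2 = negDir v1 ∧ i = psi5 (v1, v2) := by
  have key : ∀ j, dirVec v1 j + dirVec w2 j = dirVec w1 j + dirVec v2 j := by
    intro j
    have e1 := congrFun h1 j
    have e2 := congrFun h2 j
    simp only [cellAdd, emb5] at e1 e2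
    have e3 : ((dirVec v1 j + dirVec w2 j : ℤ) : ZMod 5)
        = ((dirVec w1 j + dirVec v2 j : ℤ) : ZMod 5) := by
      push_cast
      linear_combination e1 - e2
    obtain ⟨b1, b2⟩ := dirVec_bd v1 j
    obtain ⟨b3, b4⟩ := dirVec_bd w2 j
    obtain ⟨b5, b6⟩ := dirVec_bd w1 j
    obtain ⟨b7, b8⟩ := dirVec_bd v2 j
    exact cast5 (by omega) (by omega) e3
  rcases sumeq key with ⟨hA, hB⟩ | ⟨hA, hB⟩ | hC
  · -- v1 = w1, w2 = v2 : then i = 0, contradiction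
    exfalso
    apply hiz
    funext k
    have e1 := congrFun h1 k
    simp only [cellAdd, emb5] at e1
    rw [← hA] at e1
    have : i k = ((dirVec v1 k : ℤ) : ZMod 5) - ((dirVec v1 k : ℤ) : ZMod 5) := by
      linear_combination e1
    simpa [zeroC5] using this
  · exact absurd hA hne
  · -- v1 = negDir w2
    have hw2 : w2 = negDir v1 := by rw [hC, negDir_negDir]
    have hw1 : w1 = negDir v2 := by
      apply negDir_inj
      rw [negDir_negDir]
      symm
      apply add_eq_zero_iff_negDir.mp
      intro j
      have := key j
      rw [hC, dirVec_negDir] at this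
      omega
    refine ⟨hw1, hw2, ?_⟩
    funext k
    have e1 := congrFun h1 k
    simp only [cellAdd, emb5] at e1
    have : i k = ((dirVec w1 k - dirVec v1 k : ℤ) : ZMod 5) := by
      push_cast
      linear_combination e1
    rw [this, hw1]
    simp only [psi5, dirVec_negDir]
    congr 1
    ring

lemma psi5_hit {d : ℕ} {s : Dir d × Dir d} (hs1 : s.1 ≠ s.2) (hs2 : s.1 ≠ negDir s.2)
    {v w : Dir d} (h : cellAdd (psi5 s) (dirVec v) = emb5 w) :
    (v = s.1 ∧ w = negDir s.2) ∨ (v = s.2 ∧ w = negDir s.1) := by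
  have key : ∀ j, dirVec s.1 j + dirVec s.2 j = dirVec v j + dirVec (negDir w) j := by
    intro j
    have e1 := congrFun h j
    simp only [cellAdd, psi5, emb5] at e1
    rw [dirVec_negDir]
    have e3 : ((dirVec v j - dirVec s.1 j - dirVec s.2 j : ℤ) : ZMod 5)
        = ((dirVec w j : ℤ) : ZMod 5) := by
      push_cast at e1 ⊢
      linear_combination e1
    obtain ⟨b1, b2⟩ := dirVec_bd s.1 j
    obtain ⟨b3, b4⟩ := dirVec_bd s.2 j
    obtain ⟨b5, b6⟩ := dirVec_bd v j
    obtain ⟨b7, b8⟩ := dirVec_bd w j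
    have := cast5 (z1 := dirVec v j - dirVec s.1 j - dirVec s.2 j) (z2 := dirVec w j)
      (by omega) (by omega) e3
    omega
  rcases sumeq key with ⟨h1, h2⟩ | ⟨h1, h2⟩ | h1
  · exact Or.inl ⟨h1.symm, by rw [h2, negDir_negDir]⟩
  · exact Or.inr ⟨h2.symm, by rw [h1, negDir_negDir]⟩
  · exact absurd h1 hs2

lemma psi5_hit1 {d : ℕ} (s : Dir d × Dir d) :
    cellAdd (psi5 s) (dirVec s.1) = emb5 (negDir s.2) := by
  funext k
  simp only [cellAdd, psi5, emb5, dirVec_negDir]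
  push_cast
  ring

lemma psi5_hit2 {d : ℕ} (s : Dir d × Dir d) :
    cellAdd (psi5 s) (dirVec s.2) = emb5 (negDir s.1) := by
  funext k
  simp only [cellAdd, psi5, emb5, dirVec_negDir]
  push_cast
  ring

set_option maxHeartbeats 1000000 in
lemma keyI {d : ℕ} (Q : Set ℝ) (h0 : (0:ℝ) ∈ Q) (g : (Dir d → ℝ) → ℝ)
    (Λ' : Finset (Dir d × Dir d))
    (hsym : ∀ s ∈ Λ', s.1 ≠ s.2 ∧ s.1 ≠ negDir s.2)
    (hcover : ∀ u w : Dir d, u ≠ w → u ≠ negDir w → (u,w) ∈ Λ' ∨ (w,u) ∈ Λ')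
    (hnoswap : ∀ s ∈ Λ', (s.2, s.1) ∉ Λ')
    (hmono : ∀ (v : Dir d) (q : ℝ), q ∈ Q → g (monomer v q) = 0)
    (hglob : ∀ x : Cell d (fun _ => 5) → ℝ, (∀ i, x i ∈ Q) →
       ∑ i, g (nbhd x i) = 0)
    (N : Dir d → ℝ) (hN : ∀ v, N v ∈ Q) :
    g N + ∑ s ∈ Λ', g (dimer s.1 (N (negDir s.2)) s.2 (N (negDir s.1))) = 0 := by
  classical
  set x : Cell d (fun _ => 5) → ℝ :=
    fun c => if h : ∃ v, emb5 v = c then N h.choose else 0 with hxdef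
  have hxe : ∀ v, x (emb5 v) = N v := by
    intro v
    have hex : ∃ u, emb5 u = emb5 v := ⟨v, rfl⟩
    rw [hxdef]
    simp only
    rw [dif_pos hex]
    rw [emb5_inj hex.choose_spec]
  have hx0 : ∀ c, (¬ ∃ v, emb5 v = c) → x c = 0 := by
    intro c hc; rw [hxdef]; simp only; rw [dif_neg hc]
  have hxQ : ∀ c, x c ∈ Q := by
    intro c
    by_cases hc : ∃ v, emb5 v = c
    · obtain ⟨v, rfl⟩ := hc; rw [hxe]; exact hN v
    · rw [hx0 c hc]; exact h0
  have H := hglob x hxQ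
  set F : Finset (Cell d (fun _ => 5)) := insert zeroC5 (Λ'.image psi5) with hFdef
  have hz : (zeroC5 : Cell d (fun _ => 5)) ∈ F := Finset.mem_insert_self _ _
  -- cells outside F contribute 0
  have hout : ∀ i : Cell d (fun _ => 5), i ∉ F → g (nbhd x i) = 0 := by
    intro i hiF
    have hiz : i ≠ zeroC5 := fun h => hiF (h ▸ hz)
    by_cases hex : ∃ v w : Dir d, cellAdd i (dirVec v) = emb5 w
    · obtain ⟨v1, w1, h1⟩ := hex
      have hno : ∀ v, v ≠ v1 → ¬ ∃ w, cellAdd i (dirVec v) = emb5 w := by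
        rintro v hv ⟨w, hw⟩
        obtain ⟨ha, hb, hc⟩ := hit_unique h1 hw (fun he => hv he.symm) hiz
        apply hiF
        rw [hFdef]
        apply Finset.mem_insert_of_mem
        have hvv : v1 ≠ v := fun he => hv he.symm
        have hvn : v1 ≠ negDir v := by
          intro he
          exact hiz (hc.trans (psi5_zero (s := (v1, v)) he))
        rcases hcover v1 v hvv hvn with hm | hm
        · exact Finset.mem_image.mpr ⟨(v1, v), hm, hc.symm⟩
        · exact Finset.mem_image.mpr ⟨(v, v1), hm, by rw [psi5_swap]; exact hc.symm⟩
      have hnb : nbhd x i = monomer v1 (N w1) := by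
        funext v
        by_cases hv : v = v1
        · subst hv
          simp only [nbhd, monomer]
          rw [h1, hxe]
          simp
        · simp only [nbhd, monomer, if_neg hv]
          apply hx0
          rintro ⟨w, hw⟩
          exact hno v hv ⟨w, hw.symm⟩
      rw [hnb]
      exact hmono v1 (N w1) (hN w1)
    · push_neg at hex
      have hnb : nbhd x i = monomer none 0 := by
        funext v
        simp only [nbhd, monomer]
        rw [hx0 _ (fun ⟨w, hw⟩ => hex v w hw.symm)]
        split <;> rfl
      rw [hnb]
      exact hmono none 0 h0
  have hsum1 : ∑ i ∈ F, g (nbhd x i) = ∑ i, g (nbhd x i) :=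
    Finset.sum_subset (Finset.subset_univ F) (fun i _ hi => hout i hi)
  have hzn : (zeroC5 : Cell d (fun _ => 5)) ∉ Λ'.image psi5 := by
    rw [Finset.mem_image]
    rintro ⟨s, hs, hps⟩
    exact psi5_ne_zero (hsym s hs).2 hps
  have hinj : ∀ s ∈ Λ', ∀ t ∈ Λ', psi5 s = psi5 t → s = t := by
    intro s hs t ht hst
    rcases psi5_eq hst with ⟨h1, h2⟩ | ⟨h1, h2⟩ | h1
    · exact Prod.ext_iff.mpr ⟨h1, h2⟩
    · exfalso
      apply hnoswap t ht
      have : (t.2, t.1) = s := by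
        refine Prod.ext_iff.mpr ⟨h1.symm, h2.symm⟩
      rw [this]; exact hs
    · exact absurd h1 (hsym s hs).2
  have hnb0 : nbhd x zeroC5 = N := by
    funext v
    simp only [nbhd]
    rw [cellAdd_zero5, hxe]
  have hnbs : ∀ s ∈ Λ', nbhd x (psi5 s) = dimer s.1 (N (negDir s.2)) s.2 (N (negDir s.1)) := by
    intro s hs
    obtain ⟨hs1, hs2⟩ := hsym s hs
    funext v
    by_cases hv1 : v = s.1
    · subst hv1
      simp only [nbhd, dimer]
      rw [psi5_hit1, hxe]
      simp
    · by_cases hv2 : v = s.2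
      · subst hv2
        simp only [nbhd, dimer, if_neg hv1]
        rw [psi5_hit2, hxe]
        simp
      · simp only [nbhd, dimer, if_neg hv1, if_neg hv2]
        apply hx0
        rintro ⟨w, hw⟩
        rcases psi5_hit hs1 hs2 hw.symm with ⟨h1, -⟩ | ⟨h1, -⟩
        · exact hv1 h1
        · exact hv2 h1
  have hsum2 : ∑ i ∈ F, g (nbhd x i)
      = g N + ∑ s ∈ Λ', g (dimer s.1 (N (negDir s.2)) s.2 (N (negDir s.1))) := by
    rw [hFdef, Finset.sum_insert hzn, hnb0, Finset.sum_image hinj]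
    congr 1
    exact Finset.sum_congr rfl (fun s hs => by rw [hnbs s hs])
  rw [← hsum2, hsum1, H]

lemma omega_sym {d : ℕ} {u w : Dir d} (h : OmegaPair u w) : u ≠ w ∧ u ≠ negDir w := by
  rcases h with ⟨h1, h2⟩ | ⟨h1, h2, h3, h4⟩
  · subst h1
    refine ⟨fun he => h2 he.symm, fun he => h2 ?_⟩
    exact negDir_eq_none.mp he.symm
  · exact ⟨h3, h4⟩

lemma omega_or {d : ℕ} {u w : Dir d} (h1 : u ≠ w) (h2 : u ≠ negDir w) :
    OmegaPair u w ∨ OmegaPair w u := by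
  by_cases hu : u = none
  · subst hu
    exact Or.inl (Or.inl ⟨rfl, fun hw => h1 hw.symm⟩)
  · by_cases hw : w = none
    · subst hw
      exact Or.inr (Or.inl ⟨rfl, hu⟩)
    · refine Or.inl (Or.inr ⟨hu, hw, h1, h2⟩)

/-- Characterization of perturbations via a transversal `Λ` of the matching-pair
involution on `Ω`: a local function `g` is a perturbation if and only if it
vanishes on monomers and satisfies the dimer-sum formula for every neighborhood
configuration. -/
theorem perturbation_characterization
    (d : ℕ) (hd : 1 ≤ d) (Q : Set ℝ) (h0 : (0 : ℝ) ∈ Q)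
    (Λ : Finset (Dir d × Dir d))
    (hΛ1 : ∀ r ∈ Λ, OmegaPair r.1 r.2)
    (hΛ2 : ∀ u w : Dir d, OmegaPair u w →
      (((u, w) ∈ Λ ∨ (w, u) ∈ Λ) ↔
        ¬((negDir u, negDir w) ∈ Λ ∨ (negDir w, negDir u) ∈ Λ)))
    (hΛ3 : Λ.card = d ^ 2)
    (g : (Dir d → ℝ) → ℝ) :
    Perturbation Q g ↔
      ((∀ (v : Dir d) (q : ℝ), q ∈ Q → g (monomer v q) = 0) ∧
       ∀ N : Dir d → ℝ, (∀ v, N v ∈ Q) →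
        g N = ∑ r ∈ Λ,
          (g (dimer r.1 (N r.1) r.2 (N r.2))
            - g (dimer r.1 (N (negDir r.2)) r.2 (N (negDir r.1))))) := by
  classical
  constructor
  · -- hard direction
    intro hp
    refine ⟨hp.1, ?_⟩
    set negmap : Dir d × Dir d → Dir d × Dir d := fun s => (negDir s.1, negDir s.2)
      with hnmdef
    have negmap_inj : Function.Injective negmap := by
      intro a b hab
      have h1 := congrArg Prod.fst hab
      have h2 := congrArg Prod.snd hab
      simp only [hnmdef] at h1 h2
      exact Prod.ext_iff.mpr ⟨negDir_inj h1, negDir_inj h2⟩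
    have hNN : ∀ a ∈ Λ, (negDir a.1, negDir a.2) ∉ Λ ∧ (negDir a.2, negDir a.1) ∉ Λ := by
      intro a ha
      have hOm := hΛ1 a ha
      have := (hΛ2 a.1 a.2 hOm).mp (Or.inl (by rwa [Prod.mk.eta]))
      push_neg at this
      exact this
    have hcov4 : ∀ u w : Dir d, u ≠ w → u ≠ negDir w →
        (u,w) ∈ Λ ∨ (w,u) ∈ Λ ∨ (negDir u, negDir w) ∈ Λ ∨ (negDir w, negDir u) ∈ Λ := by
      intro u w h1 h2
      rcases omega_or h1 h2 with hO | hO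
      · by_cases hL : (u, w) ∈ Λ ∨ (w, u) ∈ Λ
        · rcases hL with h | h
          · exact Or.inl h
          · exact Or.inr (Or.inl h)
        · have h5 : (negDir u, negDir w) ∈ Λ ∨ (negDir w, negDir u) ∈ Λ := by
            by_contra h6
            exact hL ((hΛ2 u w hO).mpr h6)
          rcases h5 with h | h
          · exact Or.inr (Or.inr (Or.inl h))
          · exact Or.inr (Or.inr (Or.inr h))
      · by_cases hL : (w, u) ∈ Λ ∨ (u, w) ∈ Λ
        · rcases hL with h | h
          · exact Or.inr (Or.inl h)
          · exact Or.inl h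
        · have h5 : (negDir w, negDir u) ∈ Λ ∨ (negDir u, negDir w) ∈ Λ := by
            by_contra h6
            exact hL ((hΛ2 w u hO).mpr h6)
          rcases h5 with h | h
          · exact Or.inr (Or.inr (Or.inr h))
          · exact Or.inr (Or.inr (Or.inl h))
    set Λ' : Finset (Dir d × Dir d) := Λ ∪ Λ.image negmap with hΛ'def
    have hΛsubΛ' : Λ ⊆ Λ' := Finset.subset_union_left
    have hsym' : ∀ s ∈ Λ', s.1 ≠ s.2 ∧ s.1 ≠ negDir s.2 := by
      intro s hs
      rcases Finset.mem_union.mp hs with h | h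
      · exact omega_sym (hΛ1 s h)
      · obtain ⟨t, ht, rfl⟩ := Finset.mem_image.mp h
        obtain ⟨h1, h2⟩ := omega_sym (hΛ1 t ht)
        constructor
        · intro he; exact h1 (negDir_inj he)
        · intro he
          simp only [hnmdef] at he
          rw [negDir_negDir] at he
          exact h2 (by rw [← negDir_negDir t.1, he])
    have hcover' : ∀ u w : Dir d, u ≠ w → u ≠ negDir w → (u,w) ∈ Λ' ∨ (w,u) ∈ Λ' := by
      intro u w h1 h2
      rcases hcov4 u w h1 h2 with h | h | h | h
      · exact Or.inl (hΛsubΛ' h)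
      · exact Or.inr (hΛsubΛ' h)
      · refine Or.inl (Finset.mem_union_right _ (Finset.mem_image.mpr
          ⟨(negDir u, negDir w), h, by simp [hnmdef, negDir_negDir]⟩))
      · refine Or.inr (Finset.mem_union_right _ (Finset.mem_image.mpr
          ⟨(negDir w, negDir u), h, by simp [hnmdef, negDir_negDir]⟩))
    have hnoswap' : ∀ s ∈ Λ', (s.2, s.1) ∉ Λ' := by
      intro s hs hsw
      rcases Finset.mem_union.mp hs with h | h <;>
        rcases Finset.mem_union.mp hsw with h' | h'
      · exact no_swap_pair hd Λ hcov4 hΛ3 h h'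
      · obtain ⟨b, hb, hbe⟩ := Finset.mem_image.mp h'
        have hs1 : s.1 = negDir b.2 := by
          have := congrArg Prod.snd hbe; simpa [hnmdef] using this.symm
        have hs2 : s.2 = negDir b.1 := by
          have := congrArg Prod.fst hbe; simpa [hnmdef] using this.symm
        have : s = (negDir b.2, negDir b.1) := Prod.ext_iff.mpr ⟨hs1, hs2⟩
        exact (hNN b hb).2 (this ▸ h)
      · obtain ⟨a, ha, hae⟩ := Finset.mem_image.mp h
        have hq : (s.2, s.1) = (negDir a.2, negDir a.1) := by
          have h1 := congrArg Prod.fst hae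
          have h2 := congrArg Prod.snd hae
          simp only [hnmdef] at h1 h2
          exact Prod.ext_iff.mpr ⟨h2.symm, h1.symm⟩
        exact (hNN a ha).2 (hq ▸ h')
      · obtain ⟨a, ha, hae⟩ := Finset.mem_image.mp h
        obtain ⟨b, hb, hbe⟩ := Finset.mem_image.mp h'
        have hba : b = (a.2, a.1) := by
          apply negmap_inj
          rw [hbe]
          have h1 := congrArg Prod.fst hae
          have h2 := congrArg Prod.snd hae
          simp only [hnmdef] at h1 h2 ⊢
          exact Prod.ext_iff.mpr ⟨h2.symm, h1.symm⟩
        exact no_swap_pair hd Λ hcov4 hΛ3 ha (hba ▸ hb)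
    have hglob : ∀ x : Cell d (fun _ => 5) → ℝ, (∀ i, x i ∈ Q) →
        ∑ i, g (nbhd x i) = 0 := by
      intro x hx
      exact hp.2 (fun _ => 5) (fun _ => by norm_num) x hx
    have hkey := fun N hN => keyI Q h0 g Λ' hsym' hcover' hnoswap' hp.1 hglob N hN
    intro N hN
    have hk := hkey N hN
    have hdisj : Disjoint Λ (Λ.image negmap) := by
      rw [Finset.disjoint_left]
      intro a ha hai
      obtain ⟨b, hb, hbe⟩ := Finset.mem_image.mp hai
      apply (hNN b hb).1
      have heq : (negDir b.1, negDir b.2) = a := hbe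
      rw [heq]
      exact ha
    rw [hΛ'def, Finset.sum_union hdisj, Finset.sum_image
      (fun a _ b _ hab => negmap_inj hab)] at hk
    have hK : ∀ r ∈ Λ, g (dimer (negmap r).1 (N (negDir (negmap r).2))
        (negmap r).2 (N (negDir (negmap r).1)))
        = - g (dimer r.1 (N r.1) r.2 (N r.2)) := by
      intro r hr
      obtain ⟨hr1, hr2⟩ := omega_sym (hΛ1 r hr)
      set N0 : Dir d → ℝ := dimer (negDir r.1) (N r.2) (negDir r.2) (N r.1) with hN0def
      have hN0Q : ∀ v, N0 v ∈ Q := by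
        intro v
        rw [hN0def]
        simp only [dimer]
        split_ifs
        · exact hN r.2
        · exact hN r.1
        · exact h0
      have hk0 := hkey N0 hN0Q
      have hone : ∑ s ∈ Λ', g (dimer s.1 (N0 (negDir s.2)) s.2 (N0 (negDir s.1)))
          = g (dimer r.1 (N r.1) r.2 (N r.2)) := by
        have hTr : g (dimer r.1 (N0 (negDir r.2)) r.2 (N0 (negDir r.1)))
            = g (dimer r.1 (N r.1) r.2 (N r.2)) := by
          have e1 : N0 (negDir r.2) = N r.1 := by
            rw [hN0def]
            simp only [dimer]
            rw [if_neg (show ¬ (negDir r.2 = negDir r.1) from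
              fun he => hr1 (negDir_inj he).symm)]
            simp
          have e2 : N0 (negDir r.1) = N r.2 := by
            rw [hN0def]; simp [dimer]
          rw [e1, e2]
        rw [← hTr]
        apply Finset.sum_eq_single_of_mem r (hΛsubΛ' hr)
        intro s hs hsr
        obtain ⟨hs1, hs2⟩ := hsym' s hs
        by_cases c1 : s.1 = r.1
        · -- s.2 ∉ {r.1, r.2}
          have hz : N0 (negDir s.2) = 0 := by
            rw [hN0def]; simp only [dimer]
            rw [if_neg, if_neg]
            · intro he
              exact hsr (Prod.ext_iff.mpr ⟨c1, negDir_inj he⟩)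
            · intro he
              exact hs1 (c1.trans (negDir_inj he).symm)
          rw [hz, dimer_zero_left hs1]
          exact hp.1 _ _ (hN0Q _)
        · by_cases c2 : s.1 = r.2
          · -- then s.2 ≠ r.1 (else swap) and s.2 ≠ r.2 (else s.1 = s.2)
            have hz : N0 (negDir s.2) = 0 := by
              rw [hN0def]; simp only [dimer]
              rw [if_neg, if_neg]
              · intro he
                exact hs1 (c2.trans (negDir_inj he).symm)
              · intro he
                have : s.2 = r.1 := negDir_inj he
                apply hnoswap' s hs
                have : (s.2, s.1) = r := Prod.ext_iff.mpr ⟨this, c2⟩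
                rw [this]
                exact hΛsubΛ' hr
            rw [hz, dimer_zero_left hs1]
            exact hp.1 _ _ (hN0Q _)
          · -- s.1 ∉ {r.1, r.2} : second value zero
            have hz : N0 (negDir s.1) = 0 := by
              rw [hN0def]; simp only [dimer]
              rw [if_neg, if_neg]
              · intro he
                exact c2 (negDir_inj he)
              · intro he
                exact c1 (negDir_inj he)
            rw [hz, dimer_zero_right]
            exact hp.1 _ _ (hN0Q _)
      have hgN0 : g N0 = g (dimer (negmap r).1 (N (negDir (negmap r).2))
          (negmap r).2 (N (negDir (negmap r).1))) := by
        rw [hN0def]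
        simp only [hnmdef, negDir_negDir]
      rw [hone, hgN0] at hk0
      linarith
    rw [Finset.sum_congr rfl hK] at hk
    rw [Finset.sum_sub_distrib]
    rw [Finset.sum_neg_distrib] at hk
    linarith
  · -- easy direction
    rintro ⟨hm, hf⟩
    refine ⟨hm, ?_⟩
    intro n hn x hx
    haveI : ∀ k, NeZero (n k) := fun k => ⟨by have := hn k; omega⟩
    show ∑ i, g (nbhd x i) = 0
    have step1 : ∀ i : Cell d n, g (nbhd x i) = ∑ r ∈ Λ,
        (g (dimer r.1 (nbhd x i r.1) r.2 (nbhd x i r.2))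
          - g (dimer r.1 (nbhd x i (negDir r.2)) r.2 (nbhd x i (negDir r.1)))) :=
      fun i => hf (nbhd x i) (fun v => hx _)
    calc ∑ i, g (nbhd x i)
        = ∑ i : Cell d n, ∑ r ∈ Λ,
          (g (dimer r.1 (nbhd x i r.1) r.2 (nbhd x i r.2))
            - g (dimer r.1 (nbhd x i (negDir r.2)) r.2 (nbhd x i (negDir r.1)))) :=
          Finset.sum_congr rfl (fun i _ => step1 i)
      _ = ∑ r ∈ Λ, ∑ i : Cell d n,
          (g (dimer r.1 (nbhd x i r.1) r.2 (nbhd x i r.2))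
            - g (dimer r.1 (nbhd x i (negDir r.2)) r.2 (nbhd x i (negDir r.1)))) :=
          Finset.sum_comm
      _ = 0 := Finset.sum_eq_zero (fun r _ => ?_)
    rw [Finset.sum_sub_distrib, sub_eq_zero]
    have hAB : ∀ i : Cell d n,
        g (dimer r.1 (nbhd x i (negDir r.2)) r.2 (nbhd x i (negDir r.1)))
        = g (dimer r.1 (nbhd x (cellEquiv (fun k => -(dirVec r.1 k + dirVec r.2 k)) i) r.1)
            r.2 (nbhd x (cellEquiv (fun k => -(dirVec r.1 k + dirVec r.2 k)) i) r.2)) := by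
      intro i
      have z1 : (fun k => -(dirVec r.1 k + dirVec r.2 k) + dirVec r.1 k)
          = dirVec (negDir r.2) := by
        funext k; rw [dirVec_negDir]; ring
      have z2 : (fun k => -(dirVec r.1 k + dirVec r.2 k) + dirVec r.2 k)
          = dirVec (negDir r.1) := by
        funext k; rw [dirVec_negDir]; ring
      have e1 : cellAdd (cellAdd i (fun k => -(dirVec r.1 k + dirVec r.2 k))) (dirVec r.1)
          = cellAdd i (dirVec (negDir r.2)) := by
        rw [cellAdd_cellAdd, z1]
      have e2 : cellAdd (cellAdd i (fun k => -(dirVec r.1 k + dirVec r.2 k))) (dirVec r.2)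
          = cellAdd i (dirVec (negDir r.1)) := by
        rw [cellAdd_cellAdd, z2]
      simp only [nbhd, cellEquiv, Equiv.coe_fn_mk]
      rw [e1, e2]
    rw [Finset.sum_congr rfl (fun i _ => hAB i)]
    exact (Equiv.sum_comp (cellEquiv (fun k => -(dirVec r.1 k + dirVec r.2 k)))
      (fun j => g (dimer r.1 (nbhd x j r.1) r.2 (nbhd x j r.2)))).symm
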